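/- Consider the configuration-model mean-field system with inertia δ = 0 and suppose α·f_min > β·e_max (sufficiently strong in-group love relative to out-group hate). Let c be a real number with 0 ≤ c < 1/2. Then every solution of the system on [0, ∞) with θ^B_{f,e}(0) = θ^R_{f,e}(0) = c for all (f,e) ∈ I satisfies θ^B_{f,e}(t) → 0 and θ^R_{f,e}(t) → 0 as t → ∞, for every (f,e) ∈ I (consensus on the initially more popular choice in every degree bin of both groups). -/

import Mathlib

/-!
While all bins of both groups hold the same fraction `v < 1/2`, every drive equals
`(α f - β e) / (f + e) * (2 v - 1) < 0`, so each bin follows `θ' = -θ`; hence `c e^{-t}` in every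
bin is a solution. A continuous induction shows that every solution is this one: the times at
which it agrees with `c e^{-t}` form a closed set, and from any such time the drives stay negative
for a while by continuity, where uniqueness for `θ' = -θ` propagates the agreement.
-/

open Set Filter

/-- Friend-weighted fraction with choice-1:
`P_F(t) = (Σ_{(f,e)} f·P_{f,e}·θ_{f,e}(t)) / (Σ_{(f,e)} f·P_{f,e})`,
where `(f,e)` ranges over the index set `[fmin, fmax] × [emin, emax]`. -/
noncomputable def cfgPF (fmin fmax emin emax : ℕ) (P : ℕ → ℕ → ℝ)
    (θ : ℕ → ℕ → ℝ → ℝ) (t : ℝ) : ℝ :=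
  (∑ f ∈ Finset.Icc fmin fmax, ∑ e ∈ Finset.Icc emin emax, (f : ℝ) * P f e * θ f e t) /
    (∑ f ∈ Finset.Icc fmin fmax, ∑ e ∈ Finset.Icc emin emax, (f : ℝ) * P f e)

/-- Enemy-weighted fraction with choice-1:
`P_E(t) = (Σ_{(f,e)} e·P_{f,e}·θ_{f,e}(t)) / (Σ_{(f,e)} e·P_{f,e})`. -/
noncomputable def cfgPE (fmin fmax emin emax : ℕ) (P : ℕ → ℕ → ℝ)
    (θ : ℕ → ℕ → ℝ → ℝ) (t : ℝ) : ℝ :=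
  (∑ f ∈ Finset.Icc fmin fmax, ∑ e ∈ Finset.Icc emin emax, (e : ℝ) * P f e * θ f e t) /
    (∑ f ∈ Finset.Icc fmin fmax, ∑ e ∈ Finset.Icc emin emax, (e : ℝ) * P f e)

/-- `g^B_{f,e}(t) = α·(f/(f+e))·(2P_F^B(t)−1) − β·(e/(f+e))·(2P_E^B(t)−1)`, where
`P_F^B` is the friend-weighted blue fraction and `P_E^B` the enemy-weighted red fraction. -/
noncomputable def cfgGB (fmin fmax emin emax : ℕ) (PB PR : ℕ → ℕ → ℝ)
    (θB θR : ℕ → ℕ → ℝ → ℝ) (α β : ℝ) (f e : ℕ) (t : ℝ) : ℝ :=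
  α * ((f : ℝ) / ((f : ℝ) + (e : ℝ))) * (2 * cfgPF fmin fmax emin emax PB θB t - 1)
    - β * ((e : ℝ) / ((f : ℝ) + (e : ℝ))) * (2 * cfgPE fmin fmax emin emax PR θR t - 1)

/-- `g^R_{f,e}(t) = α·(f/(f+e))·(2P_F^R(t)−1) − β·(e/(f+e))·(2P_E^R(t)−1)`, where
`P_F^R` is the friend-weighted red fraction and `P_E^R` the enemy-weighted blue fraction. -/
noncomputable def cfgGR (fmin fmax emin emax : ℕ) (PB PR : ℕ → ℕ → ℝ)
    (θB θR : ℕ → ℕ → ℝ → ℝ) (α β : ℝ) (f e : ℕ) (t : ℝ) : ℝ :=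
  α * ((f : ℝ) / ((f : ℝ) + (e : ℝ))) * (2 * cfgPF fmin fmax emin emax PR θR t - 1)
    - β * ((e : ℝ) / ((f : ℝ) + (e : ℝ))) * (2 * cfgPE fmin fmax emin emax PB θB t - 1)

/-- Right-hand side of the blue equation in bin `(f,e)`:
`(1−θ^B_{f,e})·𝟙[g^B_{f,e}(t) > 0] − θ^B_{f,e}·𝟙[g^B_{f,e}(t) < 0]`. -/
noncomputable def cfgRhsB (fmin fmax emin emax : ℕ) (PB PR : ℕ → ℕ → ℝ)
    (θB θR : ℕ → ℕ → ℝ → ℝ) (α β : ℝ) (f e : ℕ) (t : ℝ) : ℝ :=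
  (1 - θB f e t) * (if 0 < cfgGB fmin fmax emin emax PB PR θB θR α β f e t then 1 else 0)
    - θB f e t * (if cfgGB fmin fmax emin emax PB PR θB θR α β f e t < 0 then 1 else 0)

/-- Right-hand side of the red equation in bin `(f,e)`:
`(1−θ^R_{f,e})·𝟙[g^R_{f,e}(t) > 0] − θ^R_{f,e}·𝟙[g^R_{f,e}(t) < 0]`. -/
noncomputable def cfgRhsR (fmin fmax emin emax : ℕ) (PB PR : ℕ → ℕ → ℝ)
    (θB θR : ℕ → ℕ → ℝ → ℝ) (α β : ℝ) (f e : ℕ) (t : ℝ) : ℝ :=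
  (1 - θR f e t) * (if 0 < cfgGR fmin fmax emin emax PB PR θB θR α β f e t then 1 else 0)
    - θR f e t * (if cfgGR fmin fmax emin emax PB PR θB θR α β f e t < 0 then 1 else 0)

/-- The family `(θ^B_{f,e}, θ^R_{f,e})_{(f,e) ∈ [fmin,fmax] × [emin,emax]}` is a solution of
the configuration-model mean-field system (inertia `δ = 0`) on the set `J`. -/
def IsCfgSolutionOn (fmin fmax emin emax : ℕ) (PB PR : ℕ → ℕ → ℝ)
    (θB θR : ℕ → ℕ → ℝ → ℝ) (α β : ℝ) (J : Set ℝ) : Prop :=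
  ∀ f ∈ Finset.Icc fmin fmax, ∀ e ∈ Finset.Icc emin emax, ∀ t ∈ J,
    HasDerivWithinAt (θB f e)
      (cfgRhsB fmin fmax emin emax PB PR θB θR α β f e t) J t ∧
    HasDerivWithinAt (θR f e)
      (cfgRhsR fmin fmax emin emax PB PR θB θR α β f e t) J t

open Topology

lemma Finset.sum_sum_mul_div_sum_sum_of_forall_eq {ι κ : Type*} {s : Finset ι} {u : Finset κ}
    {w x : ι → κ → ℝ} {v : ℝ} (hw : ∀ i ∈ s, ∀ j ∈ u, 0 < w i j) (hs : s.Nonempty)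
    (hu : u.Nonempty) (hx : ∀ i ∈ s, ∀ j ∈ u, x i j = v) :
    (∑ i ∈ s, ∑ j ∈ u, w i j * x i j) / (∑ i ∈ s, ∑ j ∈ u, w i j) = v := by
  have hpos : 0 < ∑ i ∈ s, ∑ j ∈ u, w i j :=
    Finset.sum_pos (fun i hi => Finset.sum_pos (hw i hi) hu) hs
  have hnum : ∑ i ∈ s, ∑ j ∈ u, w i j * x i j = (∑ i ∈ s, ∑ j ∈ u, w i j) * v := by
    simp_rw [Finset.sum_mul]
    exact Finset.sum_congr rfl fun i hi => Finset.sum_congr rfl fun j hj => by rw [hx i hi j hj]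
  rw [hnum, mul_div_cancel_left₀ v hpos.ne']

lemma consensus_drive_neg {α β f e v : ℝ} (hfe : 0 < f + e) (hdom : β * e < α * f)
    (hv : v < 1 / 2) :
    α * (f / (f + e)) * (2 * v - 1) - β * (e / (f + e)) * (2 * v - 1) < 0 := by
  have h : α * (f / (f + e)) * (2 * v - 1) - β * (e / (f + e)) * (2 * v - 1)
      = (α * f - β * e) / (f + e) * (2 * v - 1) := by
    field_simp
  rw [h]
  exact mul_neg_of_pos_of_neg (div_pos (by linarith) hfe) (by linarith)

lemma eqOn_of_hasDerivWithinAt_neg_self {u w : ℝ → ℝ} {a b : ℝ}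
    (hu : ContinuousOn u (Icc a b)) (hu' : ∀ t ∈ Ico a b, HasDerivWithinAt u (-u t) (Ici t) t)
    (hw : ContinuousOn w (Icc a b)) (hw' : ∀ t ∈ Ico a b, HasDerivWithinAt w (-w t) (Ici t) t)
    (ha : u a = w a) : EqOn u w (Icc a b) :=
  ODE_solution_unique_of_mem_Icc_right (v := fun _ x => -x) (s := fun _ => univ) (K := 1)
    (fun _ _ => LipschitzWith.id.neg.lipschitzOnWith) hu hu' (fun _ _ => mem_univ _)
    hw hw' (fun _ _ => mem_univ _) ha

lemma hasDerivAt_const_mul_exp_neg (c t : ℝ) :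
    HasDerivAt (fun s => c * Real.exp (-s)) (-(c * Real.exp (-t))) t := by
  simpa using ((hasDerivAt_neg t).exp).const_mul c

lemma const_mul_exp_neg_lt_half {c t : ℝ} (hc : c < 1 / 2) (ht : 0 ≤ t) :
    c * Real.exp (-t) < 1 / 2 := by
  have h1 : Real.exp (-t) ≤ 1 := Real.exp_le_one_iff.2 (neg_nonpos.2 ht)
  nlinarith [Real.exp_pos (-t)]

def CfgUniformAt (fmin fmax emin emax : ℕ) (θB θR : ℕ → ℕ → ℝ → ℝ) (t v : ℝ) : Prop :=
  ∀ f ∈ Finset.Icc fmin fmax, ∀ e ∈ Finset.Icc emin emax, θB f e t = v ∧ θR f e t = v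

section CfgSystem

variable {fmin fmax emin emax : ℕ} {P PB PR : ℕ → ℕ → ℝ} {θ θB θR : ℕ → ℕ → ℝ → ℝ} {α β : ℝ}

lemma cfgPF_eq_of_forall_eq (hf1 : 1 ≤ fmin)
    (hP : ∀ f ∈ Finset.Icc fmin fmax, ∀ e ∈ Finset.Icc emin emax, 0 < P f e)
    (hF : (Finset.Icc fmin fmax).Nonempty) (hE : (Finset.Icc emin emax).Nonempty) {t v : ℝ}
    (hθ : ∀ f ∈ Finset.Icc fmin fmax, ∀ e ∈ Finset.Icc emin emax, θ f e t = v) :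
    cfgPF fmin fmax emin emax P θ t = v := by
  refine Finset.sum_sum_mul_div_sum_sum_of_forall_eq (fun f hf e he => ?_) hF hE hθ
  have : (1 : ℝ) ≤ f := by exact_mod_cast hf1.trans (Finset.mem_Icc.1 hf).1
  exact mul_pos (by linarith) (hP f hf e he)

lemma cfgPE_eq_of_forall_eq (he1 : 1 ≤ emin)
    (hP : ∀ f ∈ Finset.Icc fmin fmax, ∀ e ∈ Finset.Icc emin emax, 0 < P f e)
    (hF : (Finset.Icc fmin fmax).Nonempty) (hE : (Finset.Icc emin emax).Nonempty) {t v : ℝ}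
    (hθ : ∀ f ∈ Finset.Icc fmin fmax, ∀ e ∈ Finset.Icc emin emax, θ f e t = v) :
    cfgPE fmin fmax emin emax P θ t = v := by
  refine Finset.sum_sum_mul_div_sum_sum_of_forall_eq (fun f hf e he => ?_) hF hE hθ
  have : (1 : ℝ) ≤ e := by exact_mod_cast he1.trans (Finset.mem_Icc.1 he).1
  exact mul_pos (by linarith) (hP f hf e he)

lemma CfgUniformAt.cfgGB_neg_and_cfgGR_neg {t v : ℝ}
    (hu : CfgUniformAt fmin fmax emin emax θB θR t v) (hv : v < 1 / 2)
    (hf1 : 1 ≤ fmin) (he1 : 1 ≤ emin)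
    (hPB : ∀ f ∈ Finset.Icc fmin fmax, ∀ e ∈ Finset.Icc emin emax, 0 < PB f e)
    (hPR : ∀ f ∈ Finset.Icc fmin fmax, ∀ e ∈ Finset.Icc emin emax, 0 < PR f e)
    (hF : (Finset.Icc fmin fmax).Nonempty) (hE : (Finset.Icc emin emax).Nonempty)
    (hdom : ∀ f ∈ Finset.Icc fmin fmax, ∀ e ∈ Finset.Icc emin emax, β * e < α * f) :
    ∀ f ∈ Finset.Icc fmin fmax, ∀ e ∈ Finset.Icc emin emax,
      cfgGB fmin fmax emin emax PB PR θB θR α β f e t < 0 ∧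
      cfgGR fmin fmax emin emax PB PR θB θR α β f e t < 0 := by
  intro f hf e he
  have hB : ∀ f ∈ Finset.Icc fmin fmax, ∀ e ∈ Finset.Icc emin emax, θB f e t = v :=
    fun f hf e he => (hu f hf e he).1
  have hR : ∀ f ∈ Finset.Icc fmin fmax, ∀ e ∈ Finset.Icc emin emax, θR f e t = v :=
    fun f hf e he => (hu f hf e he).2
  have hfe : (0 : ℝ) < f + e := by
    have : 1 ≤ f := hf1.trans (Finset.mem_Icc.1 hf).1
    positivity
  unfold cfgGB cfgGR
  rw [cfgPF_eq_of_forall_eq hf1 hPB hF hE hB, cfgPF_eq_of_forall_eq hf1 hPR hF hE hR,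
    cfgPE_eq_of_forall_eq he1 hPB hF hE hB, cfgPE_eq_of_forall_eq he1 hPR hF hE hR]
  exact ⟨consensus_drive_neg hfe (hdom f hf e he) hv, consensus_drive_neg hfe (hdom f hf e he) hv⟩

lemma cfgRhsB_eq_neg_of_cfgGB_neg {f e : ℕ} {t : ℝ}
    (h : cfgGB fmin fmax emin emax PB PR θB θR α β f e t < 0) :
    cfgRhsB fmin fmax emin emax PB PR θB θR α β f e t = -θB f e t := by
  rw [cfgRhsB, if_neg h.not_gt, if_pos h]
  ring

lemma cfgRhsR_eq_neg_of_cfgGR_neg {f e : ℕ} {t : ℝ}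
    (h : cfgGR fmin fmax emin emax PB PR θB θR α β f e t < 0) :
    cfgRhsR fmin fmax emin emax PB PR θB θR α β f e t = -θR f e t := by
  rw [cfgRhsR, if_neg h.not_gt, if_pos h]
  ring

variable {s : Set ℝ}

lemma continuousOn_cfgPF
    (hθ : ∀ f ∈ Finset.Icc fmin fmax, ∀ e ∈ Finset.Icc emin emax, ContinuousOn (θ f e) s) :
    ContinuousOn (cfgPF fmin fmax emin emax P θ) s :=
  (continuousOn_finsetSum _ fun f hf => continuousOn_finsetSum _ fun e he =>
    (hθ f hf e he).const_smul ((f : ℝ) * P f e)).div_const _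

lemma continuousOn_cfgPE
    (hθ : ∀ f ∈ Finset.Icc fmin fmax, ∀ e ∈ Finset.Icc emin emax, ContinuousOn (θ f e) s) :
    ContinuousOn (cfgPE fmin fmax emin emax P θ) s :=
  (continuousOn_finsetSum _ fun f hf => continuousOn_finsetSum _ fun e he =>
    (hθ f hf e he).const_smul ((e : ℝ) * P f e)).div_const _


lemma isClosed_setOf_cfgUniformAt_inter (hs : IsClosed s) {φ : ℝ → ℝ} (hφ : ContinuousOn φ s)
    (hB : ∀ f ∈ Finset.Icc fmin fmax, ∀ e ∈ Finset.Icc emin emax, ContinuousOn (θB f e) s)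
    (hR : ∀ f ∈ Finset.Icc fmin fmax, ∀ e ∈ Finset.Icc emin emax, ContinuousOn (θR f e) s) :
    IsClosed ({t | CfgUniformAt fmin fmax emin emax θB θR t (φ t)} ∩ s) := by
  have hset : {t | CfgUniformAt fmin fmax emin emax θB θR t (φ t)} ∩ s =
      s ∩ ⋂ f ∈ Finset.Icc fmin fmax, ⋂ e ∈ Finset.Icc emin emax,
        ({t ∈ s | θB f e t = φ t} ∩ {t ∈ s | θR f e t = φ t}) := by
    ext t
    simp only [CfgUniformAt, mem_inter_iff, mem_ofPred_eq, mem_iInter]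
    constructor
    · rintro ⟨hu, ht⟩
      exact ⟨ht, fun f hf e he => ⟨⟨ht, (hu f hf e he).1⟩, ⟨ht, (hu f hf e he).2⟩⟩⟩
    · rintro ⟨ht, hu⟩
      exact ⟨fun f hf e he => ⟨(hu f hf e he).1.2, (hu f hf e he).2.2⟩, ht⟩
  rw [hset]
  exact hs.inter (isClosed_biInter fun f hf => isClosed_biInter fun e he =>
    (hs.isClosed_eq (hB f hf e he) hφ).inter (hs.isClosed_eq (hR f hf e he) hφ))

variable {J : Set ℝ}

lemma IsCfgSolutionOn.continuousOn
    (hsol : IsCfgSolutionOn fmin fmax emin emax PB PR θB θR α β J) :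
    ∀ f ∈ Finset.Icc fmin fmax, ∀ e ∈ Finset.Icc emin emax,
      ContinuousOn (θB f e) J ∧ ContinuousOn (θR f e) J := fun f hf e he =>
  ⟨fun t ht => (hsol f hf e he t ht).1.continuousWithinAt,
    fun t ht => (hsol f hf e he t ht).2.continuousWithinAt⟩

lemma IsCfgSolutionOn.continuousOn_cfgGB
    (hsol : IsCfgSolutionOn fmin fmax emin emax PB PR θB θR α β J) (f e : ℕ) :
    ContinuousOn (cfgGB fmin fmax emin emax PB PR θB θR α β f e) J := by
  have hF := continuousOn_cfgPF (P := PB) fun f hf e he => (hsol.continuousOn f hf e he).1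
  have hE := continuousOn_cfgPE (P := PR) fun f hf e he => (hsol.continuousOn f hf e he).2
  unfold cfgGB
  fun_prop

lemma IsCfgSolutionOn.continuousOn_cfgGR
    (hsol : IsCfgSolutionOn fmin fmax emin emax PB PR θB θR α β J) (f e : ℕ) :
    ContinuousOn (cfgGR fmin fmax emin emax PB PR θB θR α β f e) J := by
  have hF := continuousOn_cfgPF (P := PR) fun f hf e he => (hsol.continuousOn f hf e he).2
  have hE := continuousOn_cfgPE (P := PB) fun f hf e he => (hsol.continuousOn f hf e he).1
  unfold cfgGR
  fun_prop

lemma IsCfgSolutionOn.cfgUniformAt_exp_of_drives_neg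
    (hsol : IsCfgSolutionOn fmin fmax emin emax PB PR θB θR α β (Ici 0)) {a b c : ℝ} (ha : 0 ≤ a)
    (hneg : ∀ t ∈ Ico a b, ∀ f ∈ Finset.Icc fmin fmax, ∀ e ∈ Finset.Icc emin emax,
      cfgGB fmin fmax emin emax PB PR θB θR α β f e t < 0 ∧
      cfgGR fmin fmax emin emax PB PR θB θR α β f e t < 0)
    (hua : CfgUniformAt fmin fmax emin emax θB θR a (c * Real.exp (-a))) :
    ∀ t ∈ Icc a b, CfgUniformAt fmin fmax emin emax θB θR t (c * Real.exp (-t)) := by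
  intro t ht f hf e he
  have hsub : Icc a b ⊆ Ici 0 := fun x hx => ha.trans hx.1
  have hderiv : ∀ x ∈ Ico a b, HasDerivWithinAt (θB f e) (-θB f e x) (Ici x) x ∧
      HasDerivWithinAt (θR f e) (-θR f e x) (Ici x) x := by
    intro x hx
    have hx0 : x ∈ Ici (0 : ℝ) := ha.trans hx.1
    obtain ⟨hB, hR⟩ := hsol f hf e he x hx0
    obtain ⟨hgB, hgR⟩ := hneg x hx f hf e he
    rw [cfgRhsB_eq_neg_of_cfgGB_neg hgB] at hB
    rw [cfgRhsR_eq_neg_of_cfgGR_neg hgR] at hR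
    exact ⟨hB.mono (Ici_subset_Ici.2 hx0), hR.mono (Ici_subset_Ici.2 hx0)⟩
  have hexp : ∀ x ∈ Ico a b, HasDerivWithinAt (fun s => c * Real.exp (-s))
      (-(c * Real.exp (-x))) (Ici x) x :=
    fun x _ => (hasDerivAt_const_mul_exp_neg c x).hasDerivWithinAt
  obtain ⟨hcB, hcR⟩ := hsol.continuousOn f hf e he
  exact ⟨eqOn_of_hasDerivWithinAt_neg_self (hcB.mono hsub) (fun x hx => (hderiv x hx).1)
      (by fun_prop) hexp (hua f hf e he).1 ht,
    eqOn_of_hasDerivWithinAt_neg_self (hcR.mono hsub) (fun x hx => (hderiv x hx).2)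
      (by fun_prop) hexp (hua f hf e he).2 ht⟩

lemma IsCfgSolutionOn.eventually_cfgUniformAt_exp
    (hsol : IsCfgSolutionOn fmin fmax emin emax PB PR θB θR α β (Ici 0))
    (hf1 : 1 ≤ fmin) (he1 : 1 ≤ emin)
    (hPB : ∀ f ∈ Finset.Icc fmin fmax, ∀ e ∈ Finset.Icc emin emax, 0 < PB f e)
    (hPR : ∀ f ∈ Finset.Icc fmin fmax, ∀ e ∈ Finset.Icc emin emax, 0 < PR f e)
    (hF : (Finset.Icc fmin fmax).Nonempty) (hE : (Finset.Icc emin emax).Nonempty)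
    (hdom : ∀ f ∈ Finset.Icc fmin fmax, ∀ e ∈ Finset.Icc emin emax, β * e < α * f)
    {c x : ℝ} (hc : c < 1 / 2) (hx : 0 ≤ x)
    (hux : CfgUniformAt fmin fmax emin emax θB θR x (c * Real.exp (-x))) :
    ∀ᶠ t in 𝓝[>] x, CfgUniformAt fmin fmax emin emax θB θR t (c * Real.exp (-t)) := by
  have hneg := hux.cfgGB_neg_and_cfgGR_neg (const_mul_exp_neg_lt_half hc hx)
    hf1 he1 hPB hPR hF hE hdom
  have hev : ∀ᶠ t in 𝓝[≥] x, ∀ f ∈ Finset.Icc fmin fmax, ∀ e ∈ Finset.Icc emin emax,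
      cfgGB fmin fmax emin emax PB PR θB θR α β f e t < 0 ∧
      cfgGR fmin fmax emin emax PB PR θB θR α β f e t < 0 := by
    have hle : 𝓝[≥] x ≤ 𝓝[Ici 0] x := nhdsWithin_mono _ (Ici_subset_Ici.2 hx)
    simp only [eventually_all_finset]
    intro f hf e he
    exact hle ((((hsol.continuousOn_cfgGB f e) x hx).eventually_lt_const (hneg f hf e he).1).and
      (((hsol.continuousOn_cfgGR f e) x hx).eventually_lt_const (hneg f hf e he).2))
  obtain ⟨u, hxu, hIcc⟩ := mem_nhdsGE_iff_exists_Icc_subset.1 hev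
  filter_upwards [Ioo_mem_nhdsGT hxu] with t ht
  exact hsol.cfgUniformAt_exp_of_drives_neg hx (fun t ht => hIcc (Ico_subset_Icc_self ht)) hux t
    (Ioo_subset_Icc_self ht)


lemma IsCfgSolutionOn.cfgUniformAt_exp
    (hsol : IsCfgSolutionOn fmin fmax emin emax PB PR θB θR α β (Ici 0))
    (hf1 : 1 ≤ fmin) (he1 : 1 ≤ emin)
    (hPB : ∀ f ∈ Finset.Icc fmin fmax, ∀ e ∈ Finset.Icc emin emax, 0 < PB f e)
    (hPR : ∀ f ∈ Finset.Icc fmin fmax, ∀ e ∈ Finset.Icc emin emax, 0 < PR f e)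
    (hF : (Finset.Icc fmin fmax).Nonempty) (hE : (Finset.Icc emin emax).Nonempty)
    (hdom : ∀ f ∈ Finset.Icc fmin fmax, ∀ e ∈ Finset.Icc emin emax, β * e < α * f)
    {c : ℝ} (hc : c < 1 / 2) (h0 : CfgUniformAt fmin fmax emin emax θB θR 0 c)
    {t : ℝ} (ht : 0 ≤ t) :
    CfgUniformAt fmin fmax emin emax θB θR t (c * Real.exp (-t)) := by
  have hclosed := isClosed_setOf_cfgUniformAt_inter (φ := fun t => c * Real.exp (-t))
    (isClosed_Icc (a := 0) (b := t)) (by fun_prop)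
    (fun f hf e he => (hsol.continuousOn f hf e he).1.mono Icc_subset_Ici_self)
    (fun f hf e he => (hsol.continuousOn f hf e he).2.mono Icc_subset_Ici_self)
  refine hclosed.Icc_subset_of_forall_mem_nhdsWithin (by simpa using h0) ?_ ⟨ht, le_rfl⟩
  rintro x ⟨hux, hx⟩
  exact hsol.eventually_cfgUniformAt_exp hf1 he1 hPB hPR hF hE hdom hc hx.1 hux

end CfgSystem

theorem cfg_consensus_to_zero_general
    (fmin fmax emin emax : ℕ)
    (hf1 : 1 ≤ fmin) (he1 : 1 ≤ emin)
    (PB PR : ℕ → ℕ → ℝ)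
    (hPB : ∀ f ∈ Finset.Icc fmin fmax, ∀ e ∈ Finset.Icc emin emax, 0 < PB f e)
    (hPR : ∀ f ∈ Finset.Icc fmin fmax, ∀ e ∈ Finset.Icc emin emax, 0 < PR f e)
    (α β : ℝ) (hα : α ∈ Set.Icc (0:ℝ) 1) (hβ : β ∈ Set.Icc (0:ℝ) 1)
    (hdom : β * (emax : ℝ) < α * (fmin : ℝ))
    (c : ℝ) (hc2 : c < 1 / 2)
    (θB θR : ℕ → ℕ → ℝ → ℝ)
    (hsol : IsCfgSolutionOn fmin fmax emin emax PB PR θB θR α β (Set.Ici 0))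
    (h0 : ∀ f ∈ Finset.Icc fmin fmax, ∀ e ∈ Finset.Icc emin emax,
      θB f e 0 = c ∧ θR f e 0 = c) :
    ∀ f ∈ Finset.Icc fmin fmax, ∀ e ∈ Finset.Icc emin emax,
      Filter.Tendsto (θB f e) Filter.atTop (nhds (0:ℝ)) ∧
      Filter.Tendsto (θR f e) Filter.atTop (nhds (0:ℝ)) := by
  intro f hf e he
  have hbins : ∀ f ∈ Finset.Icc fmin fmax, ∀ e ∈ Finset.Icc emin emax, β * e < α * f := by
    intro f hf e he
    have hf' : (fmin : ℝ) ≤ f := by exact_mod_cast (Finset.mem_Icc.1 hf).1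
    have he' : (e : ℝ) ≤ emax := by exact_mod_cast (Finset.mem_Icc.1 he).2
    calc β * e ≤ β * emax := mul_le_mul_of_nonneg_left he' hβ.1
      _ < α * fmin := hdom
      _ ≤ α * f := mul_le_mul_of_nonneg_left hf' hα.1
  have huniform : ∀ᶠ t in atTop, CfgUniformAt fmin fmax emin emax θB θR t (c * Real.exp (-t)) :=
    eventually_atTop.2 ⟨0, fun t ht =>
      hsol.cfgUniformAt_exp hf1 he1 hPB hPR ⟨f, hf⟩ ⟨e, he⟩ hbins hc2 h0 ht⟩
  have hdecay : Tendsto (fun t => c * Real.exp (-t)) atTop (𝓝 0) := by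
    simpa using Real.tendsto_exp_neg_atTop_nhds_zero.const_mul c
  exact ⟨hdecay.congr' (huniform.mono fun t ht => (ht f hf e he).1.symm),
    hdecay.congr' (huniform.mono fun t ht => (ht f hf e he).2.symm)⟩

/-- In the configuration-model mean-field system with `δ = 0`, if
`α·f_min > β·e_max` and `θ^B_{f,e}(0) = θ^R_{f,e}(0) = c` for all bins with `0 ≤ c < 1/2`,
then every solution on `[0,∞)` satisfies `θ^B_{f,e}(t) → 0` and `θ^R_{f,e}(t) → 0`
for every bin `(f,e)` (consensus on the initially more popular choice). -/
theorem cfg_consensus_to_zero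
    (fmin fmax emin emax : ℕ)
    (hf1 : 1 ≤ fmin) (hf2 : fmin ≤ fmax) (he1 : 1 ≤ emin) (he2 : emin ≤ emax)
    (PB PR : ℕ → ℕ → ℝ)
    (hPB : ∀ f ∈ Finset.Icc fmin fmax, ∀ e ∈ Finset.Icc emin emax, 0 < PB f e)
    (hPR : ∀ f ∈ Finset.Icc fmin fmax, ∀ e ∈ Finset.Icc emin emax, 0 < PR f e)
    (α β : ℝ) (hα : α ∈ Set.Icc (0:ℝ) 1) (hβ : β ∈ Set.Icc (0:ℝ) 1)
    (hdom : β * (emax : ℝ) < α * (fmin : ℝ))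
    (c : ℝ) (hc1 : 0 ≤ c) (hc2 : c < 1 / 2)
    (θB θR : ℕ → ℕ → ℝ → ℝ)
    (hsol : IsCfgSolutionOn fmin fmax emin emax PB PR θB θR α β (Set.Ici 0))
    (h0 : ∀ f ∈ Finset.Icc fmin fmax, ∀ e ∈ Finset.Icc emin emax,
      θB f e 0 = c ∧ θR f e 0 = c) :
    ∀ f ∈ Finset.Icc fmin fmax, ∀ e ∈ Finset.Icc emin emax,
      Filter.Tendsto (θB f e) Filter.atTop (nhds (0:ℝ)) ∧
      Filter.Tendsto (θR f e) Filter.atTop (nhds (0:ℝ)) :=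
  cfg_consensus_to_zero_general fmin fmax emin emax hf1 he1 PB PR hPB hPR α β hα hβ hdom c hc2 θB θR
    hsol h0
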